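/- arXiv:0904.3827 — 2 statements merged into one kernel-verified Lean document; each statement's English description precedes it below -/
import Mathlib

section
/- There exists a group isomorphism Φ from G onto the group Aut_k(K) of k-automorphisms of K such that for every σ ∈ G and every P ∈ k[x_1,…,x_n], Φ(σ)(aeval α P) = aeval α (σ·P); in particular Φ(σ)(α_i) = α_{σ(i)} for all i. -/
open MvPolynomial Polynomial

variable (k : Type*) {K : Type*} [Field k] [Field K] [Algebra k K] {n : ℕ}

/-- The ideal of `α`-relations. -/
noncomputable def relIdeal (α : Fin n → K) : Ideal (MvPolynomial (Fin n) k) :=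
  RingHom.ker (MvPolynomial.aeval α : MvPolynomial (Fin n) k →ₐ[k] K)

/-- The Galois group of `α` over `k`: permutations stabilizing the ideal of relations. -/
def galoisGroup (α : Fin n → K) : Subgroup (Equiv.Perm (Fin n)) where
  carrier := {σ | MvPolynomial.rename ⇑σ '' (relIdeal k α : Set (MvPolynomial (Fin n) k))
      = (relIdeal k α : Set (MvPolynomial (Fin n) k))}
  one_mem' := by
    have h : ∀ p : MvPolynomial (Fin n) k, rename ⇑(1 : Equiv.Perm (Fin n)) p = p := by
      intro p; simp [Equiv.Perm.coe_one, rename_id]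
    simp only [Set.mem_setOf_eq]
    rw [Set.image_congr' h]
    exact Set.image_id _
  mul_mem' := by
    intro σ τ hσ hτ
    simp only [Set.mem_setOf_eq] at *
    have h : ∀ p : MvPolynomial (Fin n) k,
        rename ⇑(σ * τ) p = rename ⇑σ (rename ⇑τ p) := by
      intro p; rw [rename_rename]; rfl
    rw [Set.image_congr' h]
    calc (fun p => rename ⇑σ (rename ⇑τ p)) '' (relIdeal k α : Set (MvPolynomial (Fin n) k))
        = rename ⇑σ '' (rename ⇑τ '' (relIdeal k α : Set (MvPolynomial (Fin n) k))) :=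
          (Set.image_comp _ _ _)
      _ = _ := by rw [hτ, hσ]
  inv_mem' := by
    intro σ hσ
    simp only [Set.mem_setOf_eq] at *
    conv_lhs => rw [← hσ]
    rw [← Set.image_comp]
    have h : ∀ p : MvPolynomial (Fin n) k,
        (rename ⇑σ⁻¹ ∘ rename ⇑σ) p = p := by
      intro p
      simp only [Function.comp_apply, rename_rename]
      have : (⇑σ⁻¹ ∘ ⇑σ) = id := by
        funext i; simp
      rw [this, rename_id, AlgHom.id_apply]
    rw [Set.image_congr' h]
    exact Set.image_id _

/-! Since `aeval α` identifies `K` with `k[x]/𝔐`, a permutation `σ` stabilizes `𝔐` exactly when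
`x_i ↦ α (σ i)` descends to a `k`-automorphism of `K`, which is then unique because the `α i`
generate `K`. Conversely, a `k`-automorphism maps roots of `f ∈ k[X]` to roots of `f`, hence
permutes the `α i`, and injectivity of `α` makes this permutation well defined. -/

variable {k}

section Lift

variable {R A B : Type*} [CommRing R] [CommRing A] [CommRing B] [Algebra R A] [Algebra R B]
  {ι : Type*}

theorem aeval_surjective_of_adjoin_range_eq_top {x : ι → A}
    (hx : Algebra.adjoin R (Set.range x) = ⊤) :
    Function.Surjective (aeval x : MvPolynomial ι R →ₐ[R] A) := by
  rw [← AlgHom.range_eq_top, ← Algebra.adjoin_range_eq_range_aeval, hx]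

theorem exists_algHom_comp_eq_of_ker_le {x : ι → A} {y : ι → B}
    (hx : Function.Surjective (aeval x : MvPolynomial ι R →ₐ[R] A))
    (hker : RingHom.ker (aeval x : MvPolynomial ι R →ₐ[R] A) ≤
      RingHom.ker (aeval y : MvPolynomial ι R →ₐ[R] B)) :
    ∃ f : A →ₐ[R] B, f ∘ x = y :=
  ⟨AlgHom.liftOfSurjective _ hx _ hker, funext fun i => by
    simpa using AlgHom.liftOfSurjective_apply _ hx _ hker (X i)⟩

theorem ker_aeval_algHom_comp (x : ι → A) {f : A →ₐ[R] B} (hf : Function.Injective f) :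
    RingHom.ker (aeval (f ∘ x) : MvPolynomial ι R →ₐ[R] B) =
      RingHom.ker (aeval x : MvPolynomial ι R →ₐ[R] A) := by
  rw [Function.comp_def, ← comp_aeval]
  exact RingHom.ker_comp_of_injective _ hf

end Lift

section Roots

variable {ι : Type*} [Fintype ι]

theorem exists_apply_eq_of_coeff_mem_range {α : ι → K}
    (hcoeff : ∀ m : ℕ, (∏ i, (Polynomial.X - Polynomial.C (α i)) : K[X]).coeff m ∈
      (algebraMap k K).range)
    (ψ : K →ₐ[k] K) (i : ι) : ∃ j, ψ (α i) = α j := by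
  obtain ⟨g, hg⟩ :=
    (Polynomial.mem_lifts _).mp ((Polynomial.lifts_iff_coeff_lifts _).mpr hcoeff)
  have heval (x : K) : Polynomial.aeval x g = ∏ j, (x - α j) := by
    rw [Polynomial.aeval_def, ← Polynomial.eval_map, hg, Polynomial.eval_prod]
    simp
  have hroot : ∏ j, (ψ (α i) - α j) = 0 := by
    rw [← heval, Polynomial.aeval_algHom_apply, heval,
      Finset.prod_eq_zero (Finset.mem_univ i) (sub_self _), map_zero]
  obtain ⟨j, -, hj⟩ := Finset.prod_eq_zero_iff.mp hroot
  exact ⟨j, sub_eq_zero.mp hj⟩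

theorem exists_perm_apply_eq_of_coeff_mem_range {α : ι → K} (hinj : Function.Injective α)
    (hcoeff : ∀ m : ℕ, (∏ i, (Polynomial.X - Polynomial.C (α i)) : K[X]).coeff m ∈
      (algebraMap k K).range)
    (ψ : K →ₐ[k] K) : ∃ σ : Equiv.Perm ι, ∀ i, ψ (α i) = α (σ i) := by
  choose u hu using exists_apply_eq_of_coeff_mem_range hcoeff ψ
  have hu_inj : Function.Injective u := fun i j hij =>
    hinj <| ψ.toRingHom.injective <| by simpa [hu] using congrArg α hij
  exact ⟨Equiv.ofBijective u (Finite.injective_iff_bijective.mp hu_inj), hu⟩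

end Roots

section GaloisGroup

variable {α : Fin n → K}

theorem mem_galoisGroup_iff {σ : Equiv.Perm (Fin n)} :
    σ ∈ galoisGroup k α ↔
      RingHom.ker (aeval (α ∘ σ) : MvPolynomial (Fin n) k →ₐ[k] K) = relIdeal k α := by
  have hpre : rename σ ⁻¹' (relIdeal k α : Set (MvPolynomial (Fin n) k)) =
      RingHom.ker (aeval (α ∘ σ) : MvPolynomial (Fin n) k →ₐ[k] K) := by
    ext P
    simp [relIdeal, aeval_rename]
  have hbij : Function.Bijective (rename σ : MvPolynomial (Fin n) k →ₐ[k] _) :=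
    (renameEquiv k σ).bijective
  change rename σ '' _ = _ ↔ _
  rw [eq_comm, ← Set.preimage_eq_iff_eq_image hbij, hpre, SetLike.coe_set_eq]

theorem mem_galoisGroup_of_algEquiv_apply {σ : Equiv.Perm (Fin n)} (ψ : K ≃ₐ[k] K)
    (hψ : ∀ i, ψ (α i) = α (σ i)) : σ ∈ galoisGroup k α := by
  have hcomp : α ∘ σ = (ψ : K →ₐ[k] K) ∘ α := funext fun i => (hψ i).symm
  rw [mem_galoisGroup_iff, hcomp, ker_aeval_algHom_comp _ ψ.injective, relIdeal]

theorem exists_algEquiv_apply_eq_of_mem_galoisGroup (hgen : Algebra.adjoin k (Set.range α) = ⊤)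
    {σ : Equiv.Perm (Fin n)} (hσ : σ ∈ galoisGroup k α) :
    ∃ ψ : K ≃ₐ[k] K, ∀ i, ψ (α i) = α (σ i) := by
  obtain ⟨f, hf⟩ := exists_algHom_comp_eq_of_ker_le
    (aeval_surjective_of_adjoin_range_eq_top hgen) (mem_galoisGroup_iff.mp hσ).ge
  have hrange : Set.range α ⊆ f.range := by
    rintro _ ⟨i, rfl⟩
    exact ⟨α (σ.symm i), by simpa using congrFun hf (σ.symm i)⟩
  have hsurj : Function.Surjective f := by
    rw [← AlgHom.range_eq_top, eq_top_iff, ← hgen]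
    exact Algebra.adjoin_le hrange
  exact ⟨AlgEquiv.ofBijective f ⟨f.toRingHom.injective, hsurj⟩, fun i => congrFun hf i⟩

end GaloisGroup

section GaloisGroupToAut

variable {α : Fin n → K} (hgen : Algebra.adjoin k (Set.range α) = ⊤)
include hgen

theorem algEquiv_ext_of_adjoin_range_eq_top {ψ ψ' : K ≃ₐ[k] K} (h : ∀ i, ψ (α i) = ψ' (α i)) :
    ψ = ψ' :=
  AlgEquiv.coe_toAlgHom_injective <| AlgHom.ext_of_adjoin_eq_top hgen <| by
    rintro _ ⟨i, rfl⟩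
    exact h i

noncomputable def galoisGroupToAut : galoisGroup k α →* (K ≃ₐ[k] K) :=
  MonoidHom.mk' (fun σ => (exists_algEquiv_apply_eq_of_mem_galoisGroup hgen σ.2).choose)
    fun σ τ => algEquiv_ext_of_adjoin_range_eq_top hgen fun i => by
      rw [AlgEquiv.mul_apply, (exists_algEquiv_apply_eq_of_mem_galoisGroup hgen τ.2).choose_spec,
        (exists_algEquiv_apply_eq_of_mem_galoisGroup hgen σ.2).choose_spec,
        (exists_algEquiv_apply_eq_of_mem_galoisGroup hgen (σ * τ).2).choose_spec]
      rfl

theorem galoisGroupToAut_apply_apply (σ : galoisGroup k α) (i : Fin n) :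
    galoisGroupToAut hgen σ (α i) = α ((σ : Equiv.Perm (Fin n)) i) :=
  (exists_algEquiv_apply_eq_of_mem_galoisGroup hgen σ.2).choose_spec i

theorem galoisGroupToAut_apply_aeval (σ : galoisGroup k α) (P : MvPolynomial (Fin n) k) :
    galoisGroupToAut hgen σ (aeval α P) = aeval α (rename (σ : Equiv.Perm (Fin n)) P) := by
  have hcomp : (galoisGroupToAut hgen σ : K →ₐ[k] K) ∘ α = α ∘ σ :=
    funext (galoisGroupToAut_apply_apply hgen σ)
  rw [aeval_rename, ← hcomp, Function.comp_def, ← comp_aeval_apply]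
  rfl

theorem galoisGroupToAut_injective (hinj : Function.Injective α) :
    Function.Injective (galoisGroupToAut hgen) := fun σ τ h =>
  Subtype.ext <| Equiv.ext fun i => hinj <| by
    rw [← galoisGroupToAut_apply_apply hgen, ← galoisGroupToAut_apply_apply hgen, h]

theorem galoisGroupToAut_surjective (hinj : Function.Injective α)
    (hcoeff : ∀ m : ℕ, (∏ i, (Polynomial.X - Polynomial.C (α i)) : K[X]).coeff m ∈
      (algebraMap k K).range) :
    Function.Surjective (galoisGroupToAut hgen) := fun ψ => by
  obtain ⟨σ, hσ⟩ := exists_perm_apply_eq_of_coeff_mem_range hinj hcoeff (ψ : K →ₐ[k] K)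
  refine ⟨⟨σ, mem_galoisGroup_of_algEquiv_apply ψ hσ⟩, ?_⟩
  exact algEquiv_ext_of_adjoin_range_eq_top hgen fun i => by
    rw [galoisGroupToAut_apply_apply hgen, ← hσ]
    rfl

end GaloisGroupToAut

/-- there is a group isomorphism `Φ : G ≃* Aut_k K` compatible with evaluation. -/
theorem exists_mulEquiv_galoisGroup_aut (α : Fin n → K) (hinj : Function.Injective α)
    (hcoeff : ∀ m : ℕ, (∏ i : Fin n, (Polynomial.X - Polynomial.C (α i)) : K[X]).coeff m ∈
      (algebraMap k K).range)
    (hgen : Algebra.adjoin k (Set.range α) = ⊤) :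
    ∃ Φ : galoisGroup k α ≃* (K ≃ₐ[k] K),
      (∀ (σ : galoisGroup k α) (P : MvPolynomial (Fin n) k),
        Φ σ (MvPolynomial.aeval α P) = MvPolynomial.aeval α (rename ⇑(σ : Equiv.Perm (Fin n)) P)) ∧
      (∀ (σ : galoisGroup k α) (i : Fin n), Φ σ (α i) = α ((σ : Equiv.Perm (Fin n)) i)) :=
  ⟨MulEquiv.ofBijective (galoisGroupToAut hgen)
      ⟨galoisGroupToAut_injective hgen hinj, galoisGroupToAut_surjective hgen hinj hcoeff⟩,
    galoisGroupToAut_apply_aeval hgen, galoisGroupToAut_apply_apply hgen⟩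
end

section
/- Let σ ∈ L. If β_{σH} lies in the image of k in K and β_{τH} ≠ β_{σH} for every coset τH ∈ L/H distinct from σH (i.e. β_{σH} is a simple root of the resolvent R that lies in k), then G is contained in the conjugate σHσ⁻¹ of H. -/
/- If `β_{σH} = c ∈ k`, then `σ·P - c` is an `α`-relation; every `τ ∈ G` preserves the relation
ideal, so `τσ·P - c` is a relation too and `β_{τσH} = c = β_{σH}`. Simplicity of the root forces
`τσH = σH`, i.e. `σ⁻¹τσ ∈ H`. -/

open MvPolynomial Polynomial

variable (k : Type*) {K : Type*} [Field k] [Field K] [Algebra k K] {n : ℕ}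

theorem Subgroup.mul_inv_mem_map_conj_of_mk_eq {G : Type*} [Group G] {H L : Subgroup G}
    (x y : L) (h : (x : L ⧸ H.subgroupOf L) = y) :
    (x : G) * (y : G)⁻¹ ∈ H.map (MulAut.conj (y : G)).toMonoidHom := by
  rw [QuotientGroup.eq, Subgroup.mem_subgroupOf] at h
  refine ⟨(y : G)⁻¹ * x, by simpa using H.inv_mem h, ?_⟩
  simp only [MulEquiv.toMonoidHom_eq_coe, MonoidHom.coe_coe, MulAut.conj_apply]
  group

section

variable {k}

theorem rename_mem_relIdeal_of_mem_galoisGroup {α : Fin n → K} {τ : Equiv.Perm (Fin n)}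
    (hτ : τ ∈ galoisGroup k α) {Q : MvPolynomial (Fin n) k} (hQ : Q ∈ relIdeal k α) :
    rename τ Q ∈ relIdeal k α := by
  have hτ' : rename τ '' (relIdeal k α : Set (MvPolynomial (Fin n) k)) = relIdeal k α := hτ
  exact hτ'.subset (Set.mem_image_of_mem _ hQ)

theorem aeval_rename_eq_algebraMap_of_mem_galoisGroup {α : Fin n → K}
    {τ : Equiv.Perm (Fin n)} (hτ : τ ∈ galoisGroup k α) {Q : MvPolynomial (Fin n) k} {c : k}
    (hQ : aeval α Q = algebraMap k K c) : aeval α (rename τ Q) = algebraMap k K c := by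
  have hrel : Q - MvPolynomial.C c ∈ relIdeal k α := by
    simp [relIdeal, RingHom.mem_ker, hQ]
  have := rename_mem_relIdeal_of_mem_galoisGroup hτ hrel
  simpa [relIdeal, RingHom.mem_ker, sub_eq_zero] using this

end

theorem galoisGroup_le_conj_of_simple_rational_root
    (α : Fin n → K)
    (H L : Subgroup (Equiv.Perm (Fin n))) (hGL : galoisGroup k α ≤ L)
    (P : MvPolynomial (Fin n) k)
    (β : (↥L ⧸ H.subgroupOf L) → K)
    (hβ : ∀ σ : ↥L, β (QuotientGroup.mk σ) =
      MvPolynomial.aeval α (rename ⇑(σ : Equiv.Perm (Fin n)) P))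
    (σ : Equiv.Perm (Fin n)) (hσ : σ ∈ L)
    (hrat : β (QuotientGroup.mk (⟨σ, hσ⟩ : ↥L)) ∈ (algebraMap k K).range)
    (hsimple : ∀ C : ↥L ⧸ H.subgroupOf L, C ≠ QuotientGroup.mk (⟨σ, hσ⟩ : ↥L) →
      β C ≠ β (QuotientGroup.mk (⟨σ, hσ⟩ : ↥L))) :
    galoisGroup k α ≤ Subgroup.map (MulAut.conj σ).toMonoidHom H := by
  intro τ hτ
  obtain ⟨c, hc⟩ := hrat
  let τσ : L := ⟨τ * σ, mul_mem (hGL hτ) hσ⟩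
  have hβτσ : β τσ = β (⟨σ, hσ⟩ : L) := by
    rw [← hc, hβ τσ]
    rw [hβ] at hc
    show aeval α (rename (τ ∘ σ) P) = _
    rw [← rename_rename]
    exact aeval_rename_eq_algebraMap_of_mem_galoisGroup hτ hc.symm
  have hcoset : (τσ : L ⧸ H.subgroupOf L) = (⟨σ, hσ⟩ : L) := by
    by_contra hne
    exact hsimple _ hne hβτσ
  simpa [τσ] using Subgroup.mul_inv_mem_map_conj_of_mk_eq _ _ hcoset
end
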